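/- arXiv:1507.02398 — 2 statements merged into one kernel-verified Lean document; each statement's English description precedes it below -/
import Mathlib

section
/- Fix a cube Q_0 ⊂ ℝ^n and let F ∈ L^1(Q_0) be nonnegative. Assume there are constants Θ ≥ 1 and 0 ≤ δ < 1/2 such that for every Q ∈ D(Q_0)\{Q_0} there exist nonnegative measurable functions H^Q, G^Q and a constant g^Q ≥ 0 satisfying: (i) F(x) ≤ G^Q(x) + H^Q(x) for a.e. x ∈ Q; (ii) ‖H^Q‖_{L^∞(Q)} ≤ Θ · (average of F over Q̂); (iii) (average of G^Q over Q) ≤ δ · (average of F over Q̂) + g^Q. Define G*_{Q_0}(x) = sup{ g^Q : Q ∈ D(Q_0), x ∈ Q }. Then for every λ ≥ (average of F over Q_0), every K > Θ and every 0 < γ < 1, |{x ∈ Q_0 : M_{Q_0}F(x) > Kλ and G*_{Q_0}(x) ≤ γλ}| ≤ ((δ+γ)/(K−Θ)) · |{x ∈ Q_0 : M_{Q_0}F(x) > λ}|. -/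
open MeasureTheory Filter
open scoped ENNReal NNReal Topology

structure Cube (n : ℕ) where
  corner : Fin n → ℝ
  side : ℝ
  side_pos : 0 < side

namespace Cube

variable {n : ℕ}

/-- The (half-open) cube determined by the data. -/
def set (Q : Cube n) : Set (Fin n → ℝ) :=
  {x | ∀ i, Q.corner i ≤ x i ∧ x i < Q.corner i + Q.side}

/-- The dyadic subcube of `Q` of generation `k` in position `m`. -/
noncomputable def dyadic (Q : Cube n) (k : ℕ) (m : Fin n → ℕ) : Cube n :=
  ⟨fun i => Q.corner i + Q.side / 2 ^ k * (m i : ℝ), Q.side / 2 ^ k,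
    div_pos Q.side_pos (by positivity)⟩

/-- `Q` belongs to the family `𝒟(Q₀)` of dyadic subcubes of `Q₀`. -/
def IsDyadicSub (Q₀ Q : Cube n) : Prop :=
  ∃ (k : ℕ) (m : Fin n → ℕ), (∀ i, m i < 2 ^ k) ∧ Q = Q₀.dyadic k m

/-- The average `(1/|Q|)∫_Q f dx` (of a nonnegative function), with values in `ℝ≥0∞`. -/
noncomputable def avg (Q : Cube n) (f : (Fin n → ℝ) → ℝ) : ℝ≥0∞ :=
  (∫⁻ x in Q.set, ENNReal.ofReal (f x)) / volume Q.set

/-- The (real-valued) average `f_Q = (1/|Q|)∫_Q f dx`. -/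
noncomputable def ravg (Q : Cube n) (f : (Fin n → ℝ) → ℝ) : ℝ :=
  ⨍ x in Q.set, f x

/-- The local dyadic maximal function `M_{Q₀} f`. -/
noncomputable def maximal (Q₀ : Cube n) (f : (Fin n → ℝ) → ℝ) (x : Fin n → ℝ) : ℝ≥0∞ :=
  ⨆ (k : ℕ) (m : Fin n → ℕ) (_ : (∀ i, m i < 2 ^ k) ∧ x ∈ (Q₀.dyadic k m).set),
    avg (Q₀.dyadic k m) f

/-- `G*_{Q₀}(x) = sup { g(Q) : Q ∈ 𝒟(Q₀), x ∈ Q }`. -/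
noncomputable def gstar (Q₀ : Cube n) (g : Cube n → ℝ) (x : Fin n → ℝ) : ℝ≥0∞ :=
  ⨆ (k : ℕ) (m : Fin n → ℕ) (_ : (∀ i, m i < 2 ^ k) ∧ x ∈ (Q₀.dyadic k m).set),
    ENNReal.ofReal (g (Q₀.dyadic k m))

/-- The local dyadic sharp maximal function `M^#_{Q₀} f`. -/
noncomputable def sharpMaximal (Q₀ : Cube n) (f : (Fin n → ℝ) → ℝ) (x : Fin n → ℝ) : ℝ≥0∞ :=
  ⨆ (k : ℕ) (m : Fin n → ℕ) (_ : (∀ i, m i < 2 ^ k) ∧ x ∈ (Q₀.dyadic k m).set),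
    avg (Q₀.dyadic k m) (fun y => |f y - ravg (Q₀.dyadic k m) f|)

/-- The normalized weak `L^p` (quasi-)norm on a cube, for an `ℝ≥0∞`-valued function. -/
noncomputable def wnorm (Q : Cube n) (p : ℝ) (f : (Fin n → ℝ) → ℝ≥0∞) : ℝ≥0∞ :=
  ⨆ (t : ℝ) (_ : 0 < t),
    ENNReal.ofReal t * (volume {x ∈ Q.set | ENNReal.ofReal t < f x} / volume Q.set) ^ (1 / p)

/-- The normalized `L^p` norm `((1/|Q|)∫_Q f^p dx)^{1/p}` for an `ℝ≥0∞`-valued function. -/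
noncomputable def lpnorm (Q : Cube n) (p : ℝ) (f : (Fin n → ℝ) → ℝ≥0∞) : ℝ≥0∞ :=
  ((∫⁻ x in Q.set, f x ^ p) / volume Q.set) ^ (1 / p)

/-- The dyadic John–Nirenberg functional `‖f‖_{JN_p^{dyadic},Q}`. -/
noncomputable def jnNorm (Q : Cube n) (p : ℝ) (f : (Fin n → ℝ) → ℝ) : ℝ≥0∞ :=
  ⨆ (𝒮 : Set (Cube n)) (_ : (∀ R ∈ 𝒮, Q.IsDyadicSub R) ∧ 𝒮.PairwiseDisjoint Cube.set),
    ((∑' R : 𝒮, avg (R : Cube n) (fun x => |f x - ravg (R : Cube n) f|) ^ p *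
        volume (R : Cube n).set) / volume Q.set) ^ (1 / p)

/-- `sup ((1/|Q|) Σ_i a(Q_i)^p |Q_i|)^{1/p}` over pairwise disjoint families in `𝒟(Q)`. -/
noncomputable def dpSup (Q : Cube n) (p : ℝ) (a : Cube n → ℝ) : ℝ≥0∞ :=
  ⨆ (𝒮 : Set (Cube n)) (_ : (∀ R ∈ 𝒮, Q.IsDyadicSub R) ∧ 𝒮.PairwiseDisjoint Cube.set),
    ((∑' R : 𝒮, ENNReal.ofReal (a (R : Cube n)) ^ p * volume (R : Cube n).set) /
      volume Q.set) ^ (1 / p)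

/-- `‖a‖_{D_p,Q}`. -/
noncomputable def dpNorm (Q : Cube n) (p : ℝ) (a : Cube n → ℝ) : ℝ≥0∞ :=
  dpSup Q p a / ENNReal.ofReal (a Q)

/-- `‖a‖_{D_p^{dyadic}(Q₀)}`. -/
noncomputable def dpGlobal (Q₀ : Cube n) (p : ℝ) (a : Cube n → ℝ) : ℝ≥0∞ :=
  ⨆ (Q : Cube n) (_ : Q₀.IsDyadicSub Q), dpNorm Q p a

end Cube

/-!
The level set `{M_{Q₀} F > λ}` is the disjoint union of the maximal dyadic cubes `Q` with
`F_Q > λ`; as `F_{Q₀} ≤ λ`, each is a proper subcube and all its ancestors have `F`-average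
`≤ λ`. If `Q` meets `{G* ≤ γλ}` then `g^Q ≤ γλ`, and on `Q` we have `F ≤ G^Q + Θλ` a.e.
A dyadic cube through a point of `Q` on which the average of `F` exceeds `Kλ ≥ λ` cannot be an
ancestor of `Q`, so it lies inside `Q` and the average of `G^Q` on it exceeds `(K - Θ)λ`.
The weak (1,1) inequality for the dyadic maximal operator localized to `Q` now gives
`(K - Θ)λ |{M F > Kλ} ∩ Q| ≤ ∫_Q G^Q ≤ (δ + γ)λ |Q|`, and we sum over the cubes `Q`.
-/

lemma ENNReal.le_ofReal_div_mul_of_ofReal_mul_le {a b c : ℝ} {x y : ℝ≥0∞} (ha : 0 < a)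
    (hc : 0 < c) (h : ENNReal.ofReal (a * c) * x ≤ ENNReal.ofReal (b * c) * y) :
    x ≤ ENNReal.ofReal (b / a) * y := by
  have hac : ENNReal.ofReal (a * c) ≠ 0 := by simpa using _root_.mul_pos ha hc
  rw [← mul_div_mul_right b a hc.ne', ENNReal.ofReal_div_of_pos (_root_.mul_pos ha hc),
    ← ENNReal.mul_div_right_comm,
    ENNReal.le_div_iff_mul_le (Or.inl hac) (Or.inl ENNReal.ofReal_ne_top), mul_comm]
  exact h

lemma measure_le_mul_of_subset_biUnion {α ι : Type*} [MeasurableSpace α] {μ : Measure α}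
    {S : Set ι} {E : ι → Set α} {A B : Set α} {c : ℝ≥0∞} (hS : S.Countable)
    (hE : ∀ i ∈ S, MeasurableSet (E i)) (hd : S.PairwiseDisjoint E) (hA : A ⊆ ⋃ i ∈ S, E i)
    (hB : ⋃ i ∈ S, E i ⊆ B) (h : ∀ i ∈ S, μ (A ∩ E i) ≤ c * μ (E i)) :
    μ A ≤ c * μ B :=
  calc μ A ≤ μ (⋃ i ∈ S, A ∩ E i) := by
        rw [← Set.inter_iUnion₂]; exact measure_mono (Set.subset_inter le_rfl hA)
    _ ≤ ∑' i : S, μ (A ∩ E i) := measure_biUnion_le μ hS _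
    _ ≤ ∑' i : S, c * μ (E i) := ENNReal.tsum_le_tsum fun i => h i i.2
    _ = c * μ (⋃ i ∈ S, E i) := by rw [ENNReal.tsum_mul_left, measure_biUnion hS hd hE]
    _ ≤ c * μ B := by gcongr

lemma ae_ofReal_le_add_of_eLpNorm_top_le {α : Type*} [MeasurableSpace α] {μ : Measure α}
    {f g h : α → ℝ} {C : ℝ≥0∞} (hfgh : ∀ᵐ x ∂μ, f x ≤ g x + h x) (hh : eLpNorm h ⊤ μ ≤ C) :
    ∀ᵐ x ∂μ, ENNReal.ofReal (f x) ≤ ENNReal.ofReal (g x) + C := by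
  rw [eLpNorm_exponent_top] at hh
  filter_upwards [hfgh, ae_le_eLpNormEssSup (f := h) (μ := μ)] with x hx hhx
  calc ENNReal.ofReal (f x) ≤ ENNReal.ofReal (g x) + ENNReal.ofReal (h x) :=
        (ENNReal.ofReal_le_ofReal hx).trans ENNReal.ofReal_add_le
    _ ≤ ENNReal.ofReal (g x) + C := by
        gcongr; exact (Real.ofReal_le_enorm _).trans (hhx.trans hh)

namespace Cube

open Set

variable {n : ℕ} {Q₀ : Cube n}

lemma mem_dyadic_iff {k : ℕ} {m : Fin n → ℕ} {x : Fin n → ℝ} :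
    x ∈ (Q₀.dyadic k m).set ↔
      ∀ i, Q₀.corner i ≤ x i ∧ ⌊(x i - Q₀.corner i) / Q₀.side * 2 ^ k⌋₊ = m i := by
  have hu : 0 < Q₀.side / 2 ^ k := div_pos Q₀.side_pos (by positivity)
  refine forall_congr' fun i => ?_
  have hlt : ∀ r : ℝ, (x i - Q₀.corner i) / Q₀.side * 2 ^ k < r ↔
      x i < Q₀.corner i + Q₀.side / 2 ^ k * r := fun r => by
    have e : (x i - Q₀.corner i) / Q₀.side * 2 ^ k = (x i - Q₀.corner i) / (Q₀.side / 2 ^ k) := by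
      field_simp
    rw [e, div_lt_iff₀ hu]
    constructor <;> intro h <;> linarith
  have hle : ∀ r : ℝ, r ≤ (x i - Q₀.corner i) / Q₀.side * 2 ^ k ↔
      Q₀.corner i + Q₀.side / 2 ^ k * r ≤ x i := fun r => by
    simpa only [not_lt] using (hlt r).not
  simp only [Cube.dyadic]
  constructor
  · rintro ⟨hlo, hhi⟩
    have hc : Q₀.corner i ≤ x i := (le_add_of_nonneg_right (by positivity)).trans hlo
    refine ⟨hc, (Nat.floor_eq_iff ((hle 0).2 (by simpa using hc))).2 ⟨(hle _).2 hlo, ?_⟩⟩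
    exact (hlt _).2 (by linarith)
  · rintro ⟨hc, hfloor⟩
    obtain ⟨hlo, hhi⟩ := (Nat.floor_eq_iff ((hle 0).2 (by simpa using hc))).1 hfloor
    exact ⟨(hle _).1 hlo, by linarith [(hlt _).1 hhi]⟩

lemma index_eq_of_mem_dyadic {k : ℕ} {m m' : Fin n → ℕ} {x : Fin n → ℝ}
    (h : x ∈ (Q₀.dyadic k m).set) (h' : x ∈ (Q₀.dyadic k m').set) : m = m' :=
  funext fun i => (mem_dyadic_iff.1 h i).2.symm.trans (mem_dyadic_iff.1 h' i).2

lemma dyadic_subset_dyadic_div_pow {j k : ℕ} (hjk : j ≤ k) (m : Fin n → ℕ) :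
    (Q₀.dyadic k m).set ⊆ (Q₀.dyadic j fun i => m i / 2 ^ (k - j)).set := by
  intro x hx
  rw [mem_dyadic_iff] at hx ⊢
  refine fun i => ⟨(hx i).1, ?_⟩
  have hpow : (2 : ℝ) ^ k = 2 ^ j * 2 ^ (k - j) := by rw [← pow_add, Nat.add_sub_cancel' hjk]
  rw [← (hx i).2, ← Nat.floor_div_natCast, hpow]
  push_cast
  field_simp

lemma div_pow_lt_pow {j k : ℕ} (hjk : j ≤ k) {m : Fin n → ℕ} (hm : ∀ i, m i < 2 ^ k) (i : Fin n) :
    m i / 2 ^ (k - j) < 2 ^ j := by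
  rw [Nat.div_lt_iff_lt_mul (by positivity), ← pow_add, Nat.add_sub_cancel' hjk]
  exact hm i

lemma set_dyadic_zero : (Q₀.dyadic 0 fun _ => 0).set = Q₀.set := by
  ext x; simp [Cube.set, Cube.dyadic]

lemma index_eq_zero_of_lt_pow_zero {m : Fin n → ℕ} (hm : ∀ i, m i < 2 ^ 0) : m = fun _ => 0 :=
  funext fun i => Nat.lt_one_iff.1 (hm i)

lemma set_dyadic_subset {k : ℕ} {m : Fin n → ℕ} (hm : ∀ i, m i < 2 ^ k) :
    (Q₀.dyadic k m).set ⊆ Q₀.set := by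
  have h := dyadic_subset_dyadic_div_pow (Q₀ := Q₀) k.zero_le m
  rwa [index_eq_zero_of_lt_pow_zero (div_pow_lt_pow k.zero_le hm), set_dyadic_zero] at h

lemma eq_div_pow_of_mem_dyadic {j k : ℕ} (hjk : j ≤ k) {m m' : Fin n → ℕ} {x : Fin n → ℝ}
    (hx : x ∈ (Q₀.dyadic j m).set) (hx' : x ∈ (Q₀.dyadic k m').set) :
    m = fun i => m' i / 2 ^ (k - j) :=
  index_eq_of_mem_dyadic hx (dyadic_subset_dyadic_div_pow hjk m' hx')

lemma set_eq_pi (Q : Cube n) :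
    Q.set = univ.pi fun i => Ico (Q.corner i) (Q.corner i + Q.side) := by
  ext x; simp [Cube.set, Set.mem_pi, mem_Ico]

lemma measurableSet_set (Q : Cube n) : MeasurableSet Q.set := by
  rw [set_eq_pi]
  exact MeasurableSet.univ_pi fun i => measurableSet_Ico

lemma volume_set (Q : Cube n) : volume Q.set = ENNReal.ofReal Q.side ^ n := by
  rw [set_eq_pi, volume_pi_pi]
  simp [Real.volume_Ico]

lemma volume_set_ne_zero (Q : Cube n) : volume Q.set ≠ 0 := by
  rw [volume_set]
  exact pow_ne_zero _ (by simp [Q.side_pos])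

lemma volume_set_ne_top (Q : Cube n) : volume Q.set ≠ ∞ := by
  rw [volume_set]
  exact ENNReal.pow_ne_top ENNReal.ofReal_ne_top

lemma lintegral_eq_avg_mul (Q : Cube n) (f : (Fin n → ℝ) → ℝ) :
    ∫⁻ x in Q.set, ENNReal.ofReal (f x) = Q.avg f * volume Q.set := by
  rw [Cube.avg, ENNReal.div_mul_cancel Q.volume_set_ne_zero Q.volume_set_ne_top]

lemma lt_avg_iff {Q : Cube n} {f : (Fin n → ℝ) → ℝ} {t : ℝ≥0∞} :
    t < Q.avg f ↔ t * volume Q.set < ∫⁻ x in Q.set, ENNReal.ofReal (f x) :=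
  ENNReal.lt_div_iff_mul_lt (Or.inl Q.volume_set_ne_zero) (Or.inl Q.volume_set_ne_top)

lemma avg_le_avg_add_of_ae_le {Q : Cube n} {f h : (Fin n → ℝ) → ℝ} (C : ℝ≥0∞)
    (hfh : ∀ᵐ x ∂volume.restrict Q.set, ENNReal.ofReal (f x) ≤ ENNReal.ofReal (h x) + C) :
    Q.avg f ≤ Q.avg h + C := by
  rw [Cube.avg, ENNReal.div_le_iff Q.volume_set_ne_zero Q.volume_set_ne_top, add_mul,
    ← lintegral_eq_avg_mul, ← setLIntegral_const, ← lintegral_add_right _ measurable_const]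
  exact lintegral_mono_ae hfh

lemma avg_dyadic_zero (f : (Fin n → ℝ) → ℝ) : (Q₀.dyadic 0 fun _ => 0).avg f = Q₀.avg f := by
  simp only [Cube.avg, set_dyadic_zero]

lemma lt_maximal_iff {f : (Fin n → ℝ) → ℝ} {x : Fin n → ℝ} {t : ℝ≥0∞} :
    t < Q₀.maximal f x ↔ ∃ k m, ((∀ i, m i < 2 ^ k) ∧ x ∈ (Q₀.dyadic k m).set) ∧
      t < (Q₀.dyadic k m).avg f := by
  simp only [Cube.maximal, lt_iSup_iff, exists_prop]

lemma avg_le_maximal {f : (Fin n → ℝ) → ℝ} {x : Fin n → ℝ} {k : ℕ} {m : Fin n → ℕ}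
    (hm : ∀ i, m i < 2 ^ k) (hx : x ∈ (Q₀.dyadic k m).set) :
    (Q₀.dyadic k m).avg f ≤ Q₀.maximal f x :=
  le_iSup_of_le k (le_iSup_of_le m (le_iSup_of_le ⟨hm, hx⟩ le_rfl))

lemma le_gstar {g : Cube n → ℝ} {x : Fin n → ℝ} {k : ℕ} {m : Fin n → ℕ}
    (hm : ∀ i, m i < 2 ^ k) (hx : x ∈ (Q₀.dyadic k m).set) :
    ENNReal.ofReal (g (Q₀.dyadic k m)) ≤ Q₀.gstar g x :=
  le_iSup_of_le k (le_iSup_of_le m (le_iSup_of_le ⟨hm, hx⟩ le_rfl))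

lemma maximal_eq_zero_of_avg_eq_zero {f : (Fin n → ℝ) → ℝ} (hf : Q₀.avg f = 0)
    (x : Fin n → ℝ) : Q₀.maximal f x = 0 := by
  have hint : ∫⁻ x in Q₀.set, ENNReal.ofReal (f x) = 0 := by
    rw [lintegral_eq_avg_mul, hf, zero_mul]
  simp only [Cube.maximal, ENNReal.iSup_eq_zero, Cube.avg, ENNReal.div_eq_zero_iff]
  exact fun k m ⟨hm, _⟩ => Or.inl (le_antisymm
    ((lintegral_mono_set (set_dyadic_subset hm)).trans hint.le) zero_le)

/- The Calderón–Zygmund stopping cubes of `P`: the index `(k, m)` stands for `Q₀.dyadic k m`,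
whose ancestor at level `j` is `Q₀.dyadic j (m / 2 ^ (k - j))`. -/
def maximalIndices (P : ℕ → (Fin n → ℕ) → Prop) : Set (ℕ × (Fin n → ℕ)) :=
  {p | P p.1 p.2 ∧ ∀ j < p.1, ¬ P j fun i => p.2 i / 2 ^ (p.1 - j)}

lemma pairwiseDisjoint_maximalIndices (Q₀ : Cube n) (P : ℕ → (Fin n → ℕ) → Prop) :
    (maximalIndices P).PairwiseDisjoint fun p => (Q₀.dyadic p.1 p.2).set := by
  have key : ∀ p ∈ maximalIndices P, ∀ q ∈ maximalIndices P, p.1 ≤ q.1 →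
      ∀ x ∈ (Q₀.dyadic p.1 p.2).set, x ∈ (Q₀.dyadic q.1 q.2).set → p = q := by
    rintro ⟨k, m⟩ ⟨hP, -⟩ ⟨k', m'⟩ ⟨-, hanc⟩ hle x hx hx'
    rcases hle.eq_or_lt with rfl | hlt
    · exact Prod.ext rfl (index_eq_of_mem_dyadic hx hx')
    · exact (hanc k hlt (eq_div_pow_of_mem_dyadic hlt.le hx hx' ▸ hP)).elim
  intro p hp q hq hne
  refine disjoint_left.2 fun x hx hx' => hne ?_
  rcases le_total p.1 q.1 with h | h
  exacts [key p hp q hq h x hx hx', (key q hq p hp h x hx' hx).symm]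

lemma mem_biUnion_maximalIndices {P : ℕ → (Fin n → ℕ) → Prop} {k : ℕ} {m : Fin n → ℕ}
    {x : Fin n → ℝ} (hx : x ∈ (Q₀.dyadic k m).set) (hP : P k m) :
    x ∈ ⋃ p ∈ maximalIndices P, (Q₀.dyadic p.1 p.2).set := by
  classical
  have hex : ∃ k, ∃ m, x ∈ (Q₀.dyadic k m).set ∧ P k m := ⟨k, m, hx, hP⟩
  obtain ⟨m₀, hx₀, hP₀⟩ := Nat.find_spec hex
  exact mem_biUnion (x := (Nat.find hex, m₀)) ⟨hP₀, fun j hj hPj =>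
    Nat.find_min hex hj ⟨_, dyadic_subset_dyadic_div_pow hj.le m₀ hx₀, hPj⟩⟩ hx₀

lemma setOf_lt_maximal_eq_biUnion (f : (Fin n → ℝ) → ℝ) (t : ℝ≥0∞) :
    {x ∈ Q₀.set | t < Q₀.maximal f x} =
      ⋃ p ∈ maximalIndices (fun k m => (∀ i, m i < 2 ^ k) ∧ t < (Q₀.dyadic k m).avg f),
        (Q₀.dyadic p.1 p.2).set := by
  ext x
  constructor
  · rintro ⟨-, hx⟩
    obtain ⟨k, m, ⟨hm, hxm⟩, hlt⟩ := lt_maximal_iff.1 hx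
    exact mem_biUnion_maximalIndices hxm ⟨hm, hlt⟩
  · simp only [mem_iUnion₂]
    rintro ⟨p, ⟨⟨hm, hlt⟩, -⟩, hx⟩
    exact ⟨set_dyadic_subset hm hx, hlt.trans_le (avg_le_maximal hm hx)⟩

lemma mul_volume_setOf_lt_avg_le (Q₀ : Cube n) (E : Set (Fin n → ℝ)) (f : (Fin n → ℝ) → ℝ)
    (t : ℝ≥0∞) :
    t * volume {x | ∃ k m, x ∈ (Q₀.dyadic k m).set ∧ (Q₀.dyadic k m).set ⊆ E ∧
        t < (Q₀.dyadic k m).avg f} ≤ ∫⁻ x in E, ENNReal.ofReal (f x) := by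
  set S := maximalIndices fun k m => (Q₀.dyadic k m).set ⊆ E ∧ t < (Q₀.dyadic k m).avg f
  have hcover : {x | ∃ k m, x ∈ (Q₀.dyadic k m).set ∧ (Q₀.dyadic k m).set ⊆ E ∧
      t < (Q₀.dyadic k m).avg f} ⊆ ⋃ p ∈ S, (Q₀.dyadic p.1 p.2).set :=
    fun x ⟨_, _, hx, hP⟩ => mem_biUnion_maximalIndices hx hP
  calc _ ≤ t * ∑' p : S, volume (Q₀.dyadic p.1.1 p.1.2).set := by
        refine mul_le_mul_right ?_ t
        exact (measure_mono hcover).trans (measure_biUnion_le _ S.to_countable _)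
    _ = ∑' p : S, t * volume (Q₀.dyadic p.1.1 p.1.2).set := ENNReal.tsum_mul_left.symm
    _ ≤ ∑' p : S, ∫⁻ x in (Q₀.dyadic p.1.1 p.1.2).set, ENNReal.ofReal (f x) :=
        ENNReal.tsum_le_tsum fun p => (lt_avg_iff.1 p.2.1.2).le
    _ = ∫⁻ x in ⋃ p ∈ S, (Q₀.dyadic p.1 p.2).set, ENNReal.ofReal (f x) :=
        (lintegral_biUnion S.to_countable (fun p _ => measurableSet_set _)
          (pairwiseDisjoint_maximalIndices Q₀ _) _).symm
    _ ≤ ∫⁻ x in E, ENNReal.ofReal (f x) := lintegral_mono_set (iUnion₂_subset fun p hp => hp.1.1)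

lemma sub_mul_volume_setOf_lt_maximal_le {k : ℕ} {m : Fin n → ℕ} {f h : (Fin n → ℝ) → ℝ}
    {T C : ℝ≥0∞} (hanc : ∀ j < k, (Q₀.dyadic j fun i => m i / 2 ^ (k - j)).avg f ≤ T)
    (hCT : C ≤ T)
    (hfh : ∀ᵐ x ∂volume.restrict (Q₀.dyadic k m).set,
      ENNReal.ofReal (f x) ≤ ENNReal.ofReal (h x) + C) :
    (T - C) * volume {x ∈ (Q₀.dyadic k m).set | T < Q₀.maximal f x} ≤
      ∫⁻ x in (Q₀.dyadic k m).set, ENNReal.ofReal (h x) := by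
  refine le_trans (mul_le_mul_right (measure_mono ?_) _) (mul_volume_setOf_lt_avg_le Q₀ _ h (T - C))
  rintro x ⟨hxQ, hx⟩
  obtain ⟨k', m', ⟨-, hxR⟩, hlt⟩ := lt_maximal_iff.1 hx
  -- a cube through `x` that is not inside `Q` is an ancestor of `Q`, so its average is `≤ T`
  have hRQ : (Q₀.dyadic k' m').set ⊆ (Q₀.dyadic k m).set := by
    rcases le_or_gt k k' with hle | hlt'
    · rw [eq_div_pow_of_mem_dyadic hle hxQ hxR]
      exact dyadic_subset_dyadic_div_pow hle m'
    · exact absurd hlt (not_lt.2 (eq_div_pow_of_mem_dyadic hlt'.le hxR hxQ ▸ hanc k' hlt'))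
  exact ⟨k', m', hxR, hRQ, ENNReal.sub_lt_of_lt_add hCT
    (hlt.trans_le (avg_le_avg_add_of_ae_le C (ae_restrict_of_ae_restrict_of_subset hRQ hfh)))⟩

lemma volume_setOf_lt_maximal_le {j : ℕ} {m : Fin n → ℕ} {F G H : (Fin n → ℝ) → ℝ}
    {Θ δ γ K lam b : ℝ} (hΘ : 0 ≤ Θ) (hδ : 0 ≤ δ) (hγ : 0 ≤ γ) (hΘK : Θ < K) (hK : 1 ≤ K)
    (hlam : 0 < lam)
    (hFGH : ∀ᵐ x ∂volume.restrict (Q₀.dyadic (j + 1) m).set, F x ≤ G x + H x)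
    (hH : eLpNorm H ⊤ (volume.restrict (Q₀.dyadic (j + 1) m).set) ≤
      ENNReal.ofReal Θ * (Q₀.dyadic j fun i => m i / 2).avg F)
    (hG : (Q₀.dyadic (j + 1) m).avg G ≤
      ENNReal.ofReal δ * (Q₀.dyadic j fun i => m i / 2).avg F + ENNReal.ofReal b)
    (hb : ENNReal.ofReal b ≤ ENNReal.ofReal (γ * lam))
    (hanc : ∀ i < j + 1, (Q₀.dyadic i fun l => m l / 2 ^ (j + 1 - i)).avg F ≤ ENNReal.ofReal lam) :
    volume {x ∈ (Q₀.dyadic (j + 1) m).set | ENNReal.ofReal (K * lam) < Q₀.maximal F x} ≤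
      ENNReal.ofReal ((δ + γ) / (K - Θ)) * volume (Q₀.dyadic (j + 1) m).set := by
  set Q := Q₀.dyadic (j + 1) m
  have hpar : (Q₀.dyadic j fun i => m i / 2).avg F ≤ ENNReal.ofReal lam := by
    simpa using hanc j j.lt_succ_self
  have hFG : ∀ᵐ x ∂volume.restrict Q.set,
      ENNReal.ofReal (F x) ≤ ENNReal.ofReal (G x) + ENNReal.ofReal (Θ * lam) :=
    ae_ofReal_le_add_of_eLpNorm_top_le hFGH (hH.trans (by rw [ENNReal.ofReal_mul hΘ]; gcongr))
  have hGint : ∫⁻ x in Q.set, ENNReal.ofReal (G x) ≤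
      ENNReal.ofReal ((δ + γ) * lam) * volume Q.set := by
    rw [lintegral_eq_avg_mul]
    gcongr
    calc Q.avg G ≤ ENNReal.ofReal δ * ENNReal.ofReal lam + ENNReal.ofReal (γ * lam) :=
          hG.trans (by gcongr)
      _ = ENNReal.ofReal ((δ + γ) * lam) := by
          rw [← ENNReal.ofReal_mul hδ, ← ENNReal.ofReal_add (by positivity) (by positivity),
            add_mul]
  refine ENNReal.le_ofReal_div_mul_of_ofReal_mul_le (sub_pos.2 hΘK) hlam ?_
  rw [sub_mul, ENNReal.ofReal_sub _ (by positivity)]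
  exact (sub_mul_volume_setOf_lt_maximal_le
    (fun i hi => (hanc i hi).trans (ENNReal.ofReal_le_ofReal (by nlinarith)))
    (ENNReal.ofReal_le_ofReal (by nlinarith)) hFG).trans hGint

end Cube

theorem good_lambda_dyadic_general (n : ℕ) (Q₀ : Cube n) (F : (Fin n → ℝ) → ℝ)
    (Θ δ : ℝ) (hΘ : 1 ≤ Θ) (hδ0 : 0 ≤ δ)
    (H G : Cube n → (Fin n → ℝ) → ℝ) (g : Cube n → ℝ)
    (h1 : ∀ (k : ℕ) (m : Fin n → ℕ), (∀ i, m i < 2 ^ (k + 1)) →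
      ∀ᵐ x ∂(volume.restrict (Q₀.dyadic (k + 1) m).set),
        F x ≤ G (Q₀.dyadic (k + 1) m) x + H (Q₀.dyadic (k + 1) m) x)
    (h2 : ∀ (k : ℕ) (m : Fin n → ℕ), (∀ i, m i < 2 ^ (k + 1)) →
      eLpNorm (H (Q₀.dyadic (k + 1) m)) ⊤ (volume.restrict (Q₀.dyadic (k + 1) m).set)
        ≤ ENNReal.ofReal Θ * Cube.avg (Q₀.dyadic k (fun i => m i / 2)) F)
    (h3 : ∀ (k : ℕ) (m : Fin n → ℕ), (∀ i, m i < 2 ^ (k + 1)) →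
      Cube.avg (Q₀.dyadic (k + 1) m) (G (Q₀.dyadic (k + 1) m))
        ≤ ENNReal.ofReal δ * Cube.avg (Q₀.dyadic k (fun i => m i / 2)) F
          + ENNReal.ofReal (g (Q₀.dyadic (k + 1) m)))
    (lam K γ : ℝ) (hlam : Cube.avg Q₀ F ≤ ENNReal.ofReal lam)
    (hK : Θ < K) (hγ0 : 0 < γ) :
    volume {x ∈ Q₀.set | ENNReal.ofReal (K * lam) < Cube.maximal Q₀ F x ∧
        Cube.gstar Q₀ g x ≤ ENNReal.ofReal (γ * lam)}
      ≤ ENNReal.ofReal ((δ + γ) / (K - Θ)) *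
        volume {x ∈ Q₀.set | ENNReal.ofReal lam < Cube.maximal Q₀ F x} := by
  set A := {x ∈ Q₀.set | ENNReal.ofReal (K * lam) < Cube.maximal Q₀ F x ∧
    Cube.gstar Q₀ g x ≤ ENNReal.ofReal (γ * lam)}
  rcases le_or_gt lam 0 with hlam0 | hlam0
  · have hM := Cube.maximal_eq_zero_of_avg_eq_zero
      (le_antisymm (hlam.trans (by simp [hlam0])) zero_le)
    simp [A, hM]
  have hΩ := Cube.setOf_lt_maximal_eq_biUnion (Q₀ := Q₀) F (ENNReal.ofReal lam)
  have hlamK : ENNReal.ofReal lam ≤ ENNReal.ofReal (K * lam) :=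
    ENNReal.ofReal_le_ofReal (by nlinarith)
  refine measure_le_mul_of_subset_biUnion (Set.to_countable _)
    (fun p _ => Cube.measurableSet_set _) (Cube.pairwiseDisjoint_maximalIndices Q₀ _)
    ?_ hΩ.superset ?_
  · rw [← hΩ]
    exact fun x hx => ⟨hx.1, hlamK.trans_lt hx.2.1⟩
  rintro ⟨_ | j, m⟩ ⟨⟨hm, hlt⟩, hanc⟩
  · rw [Cube.index_eq_zero_of_lt_pow_zero hm, Cube.avg_dyadic_zero] at hlt
    exact absurd hlam hlt.not_ge
  rcases (A ∩ (Q₀.dyadic (j + 1) m).set).eq_empty_or_nonempty with hA | ⟨x, hxA, hxQ⟩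
  · simp [hA]
  refine (measure_mono ?_).trans
    (Cube.volume_setOf_lt_maximal_le (by linarith) hδ0 hγ0.le hK (by linarith) hlam0
      (h1 j m hm) (h2 j m hm) (h3 j m hm) ((Cube.le_gstar hm hxQ).trans hxA.2.2)
      fun i hi => not_lt.1 fun h => hanc i hi ⟨Cube.div_pow_lt_pow hi.le hm, h⟩)
  exact fun y hy => ⟨hy.2, hy.1.2.1⟩

/-- **Good-λ inequality (dyadic case).** -/
theorem good_lambda_dyadic (n : ℕ) (Q₀ : Cube n) (F : (Fin n → ℝ) → ℝ)
    (hFmeas : Measurable F) (hFnonneg : ∀ x, 0 ≤ F x)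
    (hFint : IntegrableOn F Q₀.set)
    (Θ δ : ℝ) (hΘ : 1 ≤ Θ) (hδ0 : 0 ≤ δ) (hδ1 : δ < 1 / 2)
    (H G : Cube n → (Fin n → ℝ) → ℝ) (g : Cube n → ℝ)
    (hHmeas : ∀ Q, Measurable (H Q)) (hGmeas : ∀ Q, Measurable (G Q))
    (hHnn : ∀ Q x, 0 ≤ H Q x) (hGnn : ∀ Q x, 0 ≤ G Q x) (hgnn : ∀ Q, 0 ≤ g Q)
    (h1 : ∀ (k : ℕ) (m : Fin n → ℕ), (∀ i, m i < 2 ^ (k + 1)) →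
      ∀ᵐ x ∂(volume.restrict (Q₀.dyadic (k + 1) m).set),
        F x ≤ G (Q₀.dyadic (k + 1) m) x + H (Q₀.dyadic (k + 1) m) x)
    (h2 : ∀ (k : ℕ) (m : Fin n → ℕ), (∀ i, m i < 2 ^ (k + 1)) →
      eLpNorm (H (Q₀.dyadic (k + 1) m)) ⊤ (volume.restrict (Q₀.dyadic (k + 1) m).set)
        ≤ ENNReal.ofReal Θ * Cube.avg (Q₀.dyadic k (fun i => m i / 2)) F)
    (h3 : ∀ (k : ℕ) (m : Fin n → ℕ), (∀ i, m i < 2 ^ (k + 1)) →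
      Cube.avg (Q₀.dyadic (k + 1) m) (G (Q₀.dyadic (k + 1) m))
        ≤ ENNReal.ofReal δ * Cube.avg (Q₀.dyadic k (fun i => m i / 2)) F
          + ENNReal.ofReal (g (Q₀.dyadic (k + 1) m)))
    (lam K γ : ℝ) (hlam : Cube.avg Q₀ F ≤ ENNReal.ofReal lam)
    (hK : Θ < K) (hγ0 : 0 < γ) (hγ1 : γ < 1) :
    volume {x ∈ Q₀.set | ENNReal.ofReal (K * lam) < Cube.maximal Q₀ F x ∧
        Cube.gstar Q₀ g x ≤ ENNReal.ofReal (γ * lam)}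
      ≤ ENNReal.ofReal ((δ + γ) / (K - Θ)) *
        volume {x ∈ Q₀.set | ENNReal.ofReal lam < Cube.maximal Q₀ F x} :=
  good_lambda_dyadic_general n Q₀ F Θ δ hΘ hδ0 H G g h1 h2 h3 lam K γ hlam hK hγ0
end

section
/- Let (X,d,μ) be a metric measure space with μ a Borel regular doubling measure, fix η > 0, a ball B_0 ⊂ X, the family 𝓑 = 𝓑_{B_0}, τ ≥ 1 and λ_0 := (15τ)^D c_μ (1 + 1/η)^D. Let F ∈ L^1(B̂_0) be nonnegative and suppose Ω_λ := {x ∈ B̂_0 : M_𝓑F(x) > λ} is nonempty for some λ ≥ λ_0 · (μ-average of F over B̂_0). Then there exists a countable family of pairwise disjoint balls {B_i} such that: (a) ∪_i B_i ⊂ Ω_λ ⊂ ∪_i 5B_i; (b) 15τB_i ∈ 𝓑 for each i; (c) the μ-average of F over B_i exceeds λ for each i; (d) the μ-average of F over σB_i is at most λ whenever σ ≥ 2 and σB_i ∈ 𝓑. -/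
open MeasureTheory Filter
open scoped ENNReal NNReal Topology

/-- A (metric) ball, which comes with a center and a positive finite radius. -/
structure MBall (X : Type*) where
  center : X
  radius : ℝ
  radius_pos : 0 < radius

namespace MBall

variable {X : Type*} [MetricSpace X] [MeasurableSpace X]

/-- The underlying set of the ball. -/
def set (B : MBall X) : Set X := Metric.ball B.center B.radius

/-- The `t`-dilate `tB` of the ball `B`. -/
def dilate (B : MBall X) (t : ℝ) (ht : 0 < t) : MBall X :=
  ⟨B.center, t * B.radius, mul_pos ht B.radius_pos⟩

/-- `B̂ := (1+η)B`. -/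
def hat (B : MBall X) (η : ℝ) (hη : 0 < η) : MBall X :=
  B.dilate (1 + η) (by linarith)

/-- The family `𝓑 = 𝓑_{B₀} = {B(x_B,r_B) : x_B ∈ B₀, r_B ≤ η r_{B₀}}`. -/
def fam (B₀ : MBall X) (η : ℝ) : Set (MBall X) :=
  {B | B.center ∈ Metric.ball B₀.center B₀.radius ∧ B.radius ≤ η * B₀.radius}

/-- The `μ`-average `(1/μ(B))∫_B f dμ` of a nonnegative function, valued in `ℝ≥0∞`. -/
noncomputable def avg (μ : Measure X) (B : MBall X) (f : X → ℝ) : ℝ≥0∞ :=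
  (∫⁻ x in B.set, ENNReal.ofReal (f x) ∂μ) / μ B.set

/-- The real-valued `μ`-average `f_B = (1/μ(B))∫_B f dμ`. -/
noncomputable def ravg (μ : Measure X) (B : MBall X) (f : X → ℝ) : ℝ :=
  ⨍ x in B.set, f x ∂μ

/-- The maximal operator `M_𝓑` with respect to the basis `𝓑 = 𝓑_{B₀}`
(zero where no ball of the family contains the point). -/
noncomputable def maximal (μ : Measure X) (B₀ : MBall X) (η : ℝ) (f : X → ℝ) (x : X) :
    ℝ≥0∞ :=
  ⨆ (B : MBall X) (_ : B ∈ fam B₀ η ∧ x ∈ B.set), avg μ B f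

/-- `G*_𝓑(x) = sup { g(B) : B ∈ 𝓑, x ∈ B }` (zero where no ball of the family contains
the point). -/
noncomputable def gstar (B₀ : MBall X) (η : ℝ) (g : MBall X → ℝ) (x : X) : ℝ≥0∞ :=
  ⨆ (B : MBall X) (_ : B ∈ fam B₀ η ∧ x ∈ B.set), ENNReal.ofReal (g B)

/-- The normalized weak `L^p` (quasi-)norm on a ball, for an `ℝ≥0∞`-valued function. -/
noncomputable def wnorm (μ : Measure X) (B : MBall X) (p : ℝ) (f : X → ℝ≥0∞) : ℝ≥0∞ :=
  ⨆ (t : ℝ) (_ : 0 < t),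
    ENNReal.ofReal t * (μ {x ∈ B.set | ENNReal.ofReal t < f x} / μ B.set) ^ (1 / p)

/-- The normalized `L^p` norm `((1/μ(B))∫_B f^p dμ)^{1/p}` for an `ℝ≥0∞`-valued function. -/
noncomputable def lpnorm (μ : Measure X) (B : MBall X) (p : ℝ) (f : X → ℝ≥0∞) : ℝ≥0∞ :=
  ((∫⁻ x in B.set, f x ^ p ∂μ) / μ B.set) ^ (1 / p)

/-- `inf_{c ∈ ℝ} (1/μ(B)) ∫_B |f-c|^ρ dμ`. -/
noncomputable def oscInf (μ : Measure X) (ρ : ℝ) (B : MBall X) (f : X → ℝ) : ℝ≥0∞ :=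
  ⨅ c : ℝ, (∫⁻ x in B.set, ENNReal.ofReal (|f x - c| ^ ρ) ∂μ) / μ B.set

/-- The John–Nirenberg functional `‖f‖_{JN^ρ_{p,τ},B}`: the supremum over all families of
balls `{B_i}` with `{τ B_i}` pairwise disjoint and `τ B_i ⊆ B` of
`((1/μ(B)) Σ_i (inf_c ⨍_{B_i} |f-c|^ρ dμ)^{p/ρ} μ(τ B_i))^{1/p}`. -/
noncomputable def jnNorm (μ : Measure X) (p ρ τ : ℝ) (hτ : 0 < τ) (B : MBall X)
    (f : X → ℝ) : ℝ≥0∞ :=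
  ⨆ (I : Set (MBall X)) (_ : (∀ Bi ∈ I, (MBall.dilate Bi τ hτ).set ⊆ B.set) ∧
      I.PairwiseDisjoint (fun Bi => (MBall.dilate Bi τ hτ).set)),
    ((∑' Bi : I, oscInf μ ρ (Bi : MBall X) f ^ (p / ρ) *
        μ ((MBall.dilate (Bi : MBall X) τ hτ).set)) / μ B.set) ^ (1 / p)

/-- `‖a‖_{D_p,B}` for an (extended) nonnegative functional `a` on balls. -/
noncomputable def dpNorm (μ : Measure X) (p : ℝ) (B : MBall X) (a : MBall X → ℝ≥0∞) :
    ℝ≥0∞ :=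
  (⨆ (I : Set (MBall X)) (_ : (∀ Bi ∈ I, (Bi : MBall X).set ⊆ B.set) ∧
      I.PairwiseDisjoint MBall.set),
    ((∑' Bi : I, a (Bi : MBall X) ^ p * μ (Bi : MBall X).set) / μ B.set) ^ (1 / p)) / a B

/-- `‖a‖_{D_p(B₀)} = sup_{B ⊆ B₀} ‖a‖_{D_p,B}`. -/
noncomputable def dpGlobal (μ : Measure X) (p : ℝ) (B₀ : MBall X) (a : MBall X → ℝ≥0∞) :
    ℝ≥0∞ :=
  ⨆ (B : MBall X) (_ : B.set ⊆ B₀.set), dpNorm μ p B a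

end MBall

/-! Balls whose average exceeds `λ` but whose dilates in `𝓑` by factors `σ ≥ 2` do not
("stopping balls") exist around every point of `Ω_λ`: take one whose radius is more than half
the supremum of the radii of the balls of `𝓑` through the point with average above `λ`.
By doubling, a ball of `𝓑` of radius at least `η r_{B₀} / (15τ)` has average at most
`λ₀ ⨍_{B̂₀} F ≤ λ`, so stopping balls are small enough that their `15τ`-dilates stay in `𝓑`.
Vitali's covering lemma extracts a disjoint subfamily whose `5`-dilates cover `Ω_λ`; it is
countable because its balls have positive measure and lie in `B̂₀`, which has finite measure. -/

theorem Set.PairwiseDisjoint.countable_of_measure_pos {α ι : Type*} [MeasurableSpace α]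
    {μ : Measure α} {u : Set ι} {s : ι → Set α} {S : Set α} (hdisj : u.PairwiseDisjoint s)
    (hmeas : ∀ i ∈ u, MeasurableSet (s i)) (hpos : ∀ i ∈ u, 0 < μ (s i))
    (hsub : ∀ i ∈ u, s i ⊆ S) (hS : μ S ≠ ⊤) : u.Countable := by
  have hposmeas : Set.Countable {i : u | 0 < μ (s i)} :=
    Measure.countable_meas_pos_of_disjoint_of_meas_iUnion_ne_top μ (fun i => hmeas i i.2)
      (fun i j hij => hdisj i.2 j.2 (Subtype.coe_injective.ne hij))
      (ne_top_of_le_ne_top hS (measure_mono (Set.iUnion_subset fun i => hsub i i.2)))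
  rw [← Set.countable_coe_iff, ← Set.countable_univ_iff]
  exact hposmeas.mono fun i _ => hpos i i.2

namespace MBall

variable {X : Type*}

theorem hat_radius_div_le {B₀ B : MBall X} {η t : ℝ} (hη : 0 < η)
    (hB : η * B₀.radius ≤ t * B.radius) :
    (B₀.hat η hη).radius / B.radius ≤ t * (1 + 1 / η) := by
  rw [div_le_iff₀ B.radius_pos]
  calc (B₀.hat η hη).radius = (1 + 1 / η) * (η * B₀.radius) := by
        show (1 + η) * B₀.radius = _
        field_simp
        ring
    _ ≤ (1 + 1 / η) * (t * B.radius) := by gcongr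
    _ = t * (1 + 1 / η) * B.radius := by ring

variable [MetricSpace X]

theorem set_subset_dilate (B : MBall X) {t : ℝ} (ht : 0 < t) (h1t : 1 ≤ t) :
    B.set ⊆ (B.dilate t ht).set :=
  Metric.ball_subset_ball (le_mul_of_one_le_left B.radius_pos.le h1t)

theorem dilate_mem_fam {B₀ B : MBall X} {η t : ℝ} (hB : B ∈ fam B₀ η) (ht : 0 < t)
    (htB : t * B.radius ≤ η * B₀.radius) : B.dilate t ht ∈ fam B₀ η :=
  ⟨hB.1, htB⟩

theorem set_subset_hat_of_mem_fam {B₀ B : MBall X} {η : ℝ} (hη : 0 < η) (hB : B ∈ fam B₀ η) :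
    B.set ⊆ (B₀.hat η hη).set := by
  intro y (hy : dist y B.center < B.radius)
  have hc : dist B.center B₀.center < B₀.radius := hB.1
  show dist y B₀.center < (1 + η) * B₀.radius
  linarith [dist_triangle y B.center B₀.center, hB.2]

theorem set_subset_dilate_five_of_inter {B b : MBall X} (hBb : (B.set ∩ b.set).Nonempty)
    (hr : B.radius ≤ 2 * b.radius) : B.set ⊆ (b.dilate 5 (by norm_num)).set := by
  obtain ⟨z, (hzB : dist z B.center < B.radius), (hzb : dist z b.center < b.radius)⟩ := hBb
  intro x (hx : dist x B.center < B.radius)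
  show dist x b.center < 5 * b.radius
  linarith [dist_triangle4 x B.center z b.center, dist_comm B.center z]

theorem exists_disjoint_subfamily_subset_dilate_five (t : Set (MBall X)) {R : ℝ}
    (hR : ∀ B ∈ t, B.radius ≤ R) :
    ∃ u ⊆ t, u.PairwiseDisjoint set ∧
      ∀ B ∈ t, ∃ b ∈ u, B.set ⊆ (b.dilate 5 (by norm_num)).set := by
  obtain ⟨u, hut, hdisj, hcover⟩ :=
    Vitali.exists_disjoint_subfamily_covering_enlargement set t radius 2 one_lt_two
      (fun B _ => B.radius_pos.le) R hR (fun B _ => ⟨B.center, Metric.mem_ball_self B.radius_pos⟩)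
  refine ⟨u, hut, hdisj, fun B hB => ?_⟩
  obtain ⟨b, hbu, hBb, hr⟩ := hcover B hB
  exact ⟨b, hbu, set_subset_dilate_five_of_inter hBb hr⟩

variable [MeasurableSpace X]

theorem avg_le_maximal {μ : Measure X} {B₀ B : MBall X} {η : ℝ} {f : X → ℝ}
    (hB : B ∈ fam B₀ η) {x : X} (hx : x ∈ B.set) : avg μ B f ≤ maximal μ B₀ η f x :=
  le_iSup₂ (f := fun (B : MBall X) (_ : B ∈ fam B₀ η ∧ x ∈ B.set) => avg μ B f) B ⟨hB, hx⟩

theorem avg_le_mul_avg_of_subset {μ : Measure X} {B B' : MBall X} {c : ℝ≥0∞} (f : X → ℝ)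
    (hsub : B.set ⊆ B'.set) (hμ : μ B'.set ≤ c * μ B.set) (h0 : μ B'.set ≠ 0)
    (htop : μ B'.set ≠ ⊤) : avg μ B f ≤ c * avg μ B' f := by
  refine ENNReal.div_le_of_le_mul ?_
  calc ∫⁻ x in B.set, ENNReal.ofReal (f x) ∂μ
      ≤ ∫⁻ x in B'.set, ENNReal.ofReal (f x) ∂μ := lintegral_mono_set hsub
    _ = avg μ B' f * μ B'.set := (ENNReal.div_mul_cancel h0 htop).symm
    _ ≤ avg μ B' f * (c * μ B.set) := by gcongr
    _ = c * avg μ B' f * μ B.set := by ring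

theorem avg_le_of_mem_fam {μ : Measure X} {cμ D : ℝ} (hcμ : 0 ≤ cμ) (hD : 0 ≤ D)
    (hdoubling : ∀ B B' : MBall X, B.set ⊆ B'.set → B.radius ≤ B'.radius →
      μ B'.set ≤ ENNReal.ofReal (cμ * (B'.radius / B.radius) ^ D) * μ B.set)
    {η t : ℝ} (hη : 0 < η) (ht : 0 < t) {B₀ B : MBall X}
    (h0 : μ (B₀.hat η hη).set ≠ 0) (htop : μ (B₀.hat η hη).set ≠ ⊤)
    (hB : B ∈ fam B₀ η) (hrB : η * B₀.radius ≤ t * B.radius) (f : X → ℝ) :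
    avg μ B f ≤ ENNReal.ofReal (t ^ D * cμ * (1 + 1 / η) ^ D) * avg μ (B₀.hat η hη) f := by
  have hsub := set_subset_hat_of_mem_fam hη hB
  have hr : B.radius ≤ (B₀.hat η hη).radius :=
    hB.2.trans (mul_le_mul_of_nonneg_right (by linarith) B₀.radius_pos.le)
  have hratio : cμ * ((B₀.hat η hη).radius / B.radius) ^ D ≤ t ^ D * cμ * (1 + 1 / η) ^ D := by
    calc cμ * ((B₀.hat η hη).radius / B.radius) ^ D ≤ cμ * (t * (1 + 1 / η)) ^ D := by
          gcongr
          · exact div_nonneg (B₀.hat η hη).radius_pos.le B.radius_pos.le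
          · exact hat_radius_div_le hη hrB
      _ = t ^ D * cμ * (1 + 1 / η) ^ D := by
          rw [Real.mul_rpow ht.le (by positivity)]
          ring
  calc avg μ B f ≤ ENNReal.ofReal (cμ * ((B₀.hat η hη).radius / B.radius) ^ D) *
        avg μ (B₀.hat η hη) f :=
        avg_le_mul_avg_of_subset f hsub (hdoubling B _ hsub hr) h0 htop
    _ ≤ _ := by gcongr

def stoppingBalls (μ : Measure X) (B₀ : MBall X) (η : ℝ) (f : X → ℝ) (lam : ℝ) :
    Set (MBall X) :=
  {B | B ∈ fam B₀ η ∧ ENNReal.ofReal lam < avg μ B f ∧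
    ∀ (σ : ℝ) (hσ : 0 < σ), 2 ≤ σ → B.dilate σ hσ ∈ fam B₀ η →
      avg μ (B.dilate σ hσ) f ≤ ENNReal.ofReal lam}

theorem set_subset_of_mem_stoppingBalls {μ : Measure X} {B₀ B : MBall X} {η : ℝ} (hη : 0 < η)
    {f : X → ℝ} {lam : ℝ} (hB : B ∈ stoppingBalls μ B₀ η f lam) :
    B.set ⊆ {x ∈ (B₀.hat η hη).set | ENNReal.ofReal lam < maximal μ B₀ η f x} :=
  fun _ hx => ⟨set_subset_hat_of_mem_fam hη hB.1 hx, hB.2.1.trans_le (avg_le_maximal hB.1 hx)⟩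

theorem exists_mem_stoppingBalls_of_lt_maximal {μ : Measure X} {B₀ : MBall X} {η : ℝ}
    {f : X → ℝ} {lam : ℝ} {x : X} (hx : ENNReal.ofReal lam < maximal μ B₀ η f x) :
    ∃ B ∈ stoppingBalls μ B₀ η f lam, x ∈ B.set := by
  set good : Set (MBall X) := {B | B ∈ fam B₀ η ∧ x ∈ B.set ∧ ENNReal.ofReal lam < avg μ B f}
  obtain ⟨B₁, hB₁⟩ : good.Nonempty := by
    obtain ⟨B₁, hB₁⟩ := lt_iSup_iff.mp hx
    obtain ⟨⟨hfam, hxB₁⟩, hlt⟩ := lt_iSup_iff.mp hB₁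
    exact ⟨B₁, hfam, hxB₁, hlt⟩
  have hbdd : BddAbove (radius '' good) := ⟨η * B₀.radius, by rintro _ ⟨B, hB, rfl⟩; exact hB.1.2⟩
  set R := sSup (radius '' good)
  have hR : 0 < R := B₁.radius_pos.trans_le (le_csSup hbdd ⟨B₁, hB₁, rfl⟩)
  obtain ⟨_, ⟨B, ⟨hfam, hxB, hlt⟩, rfl⟩, hRB⟩ :=
    exists_lt_of_lt_csSup (Set.Nonempty.image radius ⟨B₁, hB₁⟩) (half_lt_self hR)
  refine ⟨B, ⟨hfam, hlt, fun σ hσ hσ2 hσfam => ?_⟩, hxB⟩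
  by_contra! hσlt
  have hmem : B.dilate σ hσ ∈ good :=
    ⟨hσfam, set_subset_dilate B hσ (by linarith) hxB, hσlt⟩
  have hle : σ * B.radius ≤ R := le_csSup hbdd ⟨_, hmem, rfl⟩
  nlinarith [B.radius_pos]

end MBall

/-- **Calderón–Zygmund type covering lemma (Lemma 7.2).** -/
theorem calderon_zygmund_covering
    {X : Type*} [MetricSpace X] [MeasurableSpace X] [BorelSpace X]
    (μ : Measure X) (cμ D : ℝ) (hcμ : 0 < cμ) (hD : 0 < D)
    (hdoubling : ∀ B B' : MBall X, B.set ⊆ B'.set → B.radius ≤ B'.radius →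
      μ B'.set ≤ ENNReal.ofReal (cμ * (B'.radius / B.radius) ^ D) * μ B.set)
    (hpos : ∀ B : MBall X, 0 < μ B.set) (hfin : ∀ B : MBall X, μ B.set < ⊤)
    (η : ℝ) (hη : 0 < η) (B₀ : MBall X) (τ : ℝ) (hτ : 1 ≤ τ)
    (F : X → ℝ)
    (lam : ℝ)
    (hlam : ENNReal.ofReal ((15 * τ) ^ D * cμ * (1 + 1 / η) ^ D) *
        MBall.avg μ (B₀.hat η hη) F ≤ ENNReal.ofReal lam) :
    ∃ I : Set (MBall X), I.Countable ∧ I.PairwiseDisjoint MBall.set ∧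
      (⋃ B ∈ I, MBall.set B)
        ⊆ {x ∈ (B₀.hat η hη).set | ENNReal.ofReal lam < MBall.maximal μ B₀ η F x} ∧
      {x ∈ (B₀.hat η hη).set | ENNReal.ofReal lam < MBall.maximal μ B₀ η F x}
        ⊆ ⋃ B ∈ I, (MBall.dilate B 5 (by norm_num)).set ∧
      (∀ B ∈ I, MBall.dilate B (15 * τ) (by linarith) ∈ MBall.fam B₀ η) ∧
      (∀ B ∈ I, ENNReal.ofReal lam < MBall.avg μ B F) ∧
      (∀ B ∈ I, ∀ (σ : ℝ) (hσ : 0 < σ), 2 ≤ σ →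
        MBall.dilate B σ hσ ∈ MBall.fam B₀ η →
        MBall.avg μ (MBall.dilate B σ hσ) F ≤ ENNReal.ofReal lam) := by
  obtain ⟨I, hIs, hdisj, hcover⟩ := MBall.exists_disjoint_subfamily_subset_dilate_five
    (MBall.stoppingBalls μ B₀ η F lam) (fun B hB => hB.1.2)
  have hcount : I.Countable := hdisj.countable_of_measure_pos
    (fun _ _ => Metric.isOpen_ball.measurableSet) (fun B _ => hpos B)
    (fun B hB => MBall.set_subset_hat_of_mem_fam hη (hIs hB).1) (hfin _).ne
  refine ⟨I, hcount, hdisj,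
    Set.iUnion₂_subset fun B hB => MBall.set_subset_of_mem_stoppingBalls hη (hIs hB),
    fun x hx => ?_, fun B hB => ?_, fun B hB => (hIs hB).2.1, fun B hB => (hIs hB).2.2⟩
  · obtain ⟨B, hB, hxB⟩ := MBall.exists_mem_stoppingBalls_of_lt_maximal hx.2
    obtain ⟨b, hbI, hBb⟩ := hcover B hB
    exact Set.mem_iUnion₂.mpr ⟨b, hbI, hBb hxB⟩
  · refine MBall.dilate_mem_fam (hIs hB).1 _ (le_of_lt ?_)
    by_contra! hlarge
    have hsmall := MBall.avg_le_of_mem_fam hcμ.le hD.le hdoubling hη (by linarith)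
      (hpos _).ne' (hfin _).ne (hIs hB).1 hlarge F
    exact (hIs hB).2.1.not_ge (hsmall.trans hlam)
end
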